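/- For every P = (p,q,r) ∈ ℤ³ and every lattice point a ∈ ℤ³, one has β_P(a) ≥ α(a), with equality if and only if a ∈ {(p,q,r), (p+1,q,r), (p,q+1,r), (p,q,r+1)} (i.e., a is a vertex of the tetrahedron T¹_P); in particular β_P(a) > α(a) for every lattice point a outside this four-element set. -/

import Mathlib

/-- The lifting function `α(x,y,z) = −2x² − 2y² − 2z² − xy − 2xz − 2yz`. -/
noncomputable def liftα (x y z : ℝ) : ℝ :=
  -2 * x ^ 2 - 2 * y ^ 2 - 2 * z ^ 2 - x * y - 2 * x * z - 2 * y * z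

/-- The affine function `β_P` whose graph is the affine hull of the lift of `T¹_P`. -/
noncomputable def liftβ (p q r x y z : ℝ) : ℝ :=
  2 * p + 2 * q + 2 * r - liftα p q r - (4 * p + q + 2 * r + 2) * x -
    (p + 4 * q + 2 * r + 2) * y - (2 * p + 2 * q + 4 * r + 2) * z

/-!
Put `(u,v,w) = a - P`. Then `2(β_P(a) − α(a))` is a combination with nonnegative coefficients of
the products `ℓ(ℓ − 1)` for the linear forms `ℓ = u, v, w, u + w, v + w, u + v + w`, each of
which takes only the values `0` and `1` on the vertices of the standard tetrahedron. On integers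
`n(n − 1) ≥ 0`, with equality iff `n ∈ {0, 1}`; and `u, v, w, u + v + w ∈ {0, 1}` says exactly
that `(u,v,w)` is a vertex of the standard tetrahedron.
-/

theorem Int.mul_sub_one_nonneg (n : ℤ) : 0 ≤ n * (n - 1) := by
  rcases le_or_gt n 0 with hn | hn
  · exact mul_nonneg_of_nonpos_of_nonpos hn (by omega)
  · exact mul_nonneg hn.le (by omega)

theorem Int.mul_sub_one_eq_zero_iff (n : ℤ) : n * (n - 1) = 0 ↔ n = 0 ∨ n = 1 := by
  rw [mul_eq_zero, sub_eq_zero]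

def tetraDefect (u v w : ℤ) : ℤ :=
  2 * (u * (u - 1)) + 2 * (v * (v - 1)) + w * (w - 1) + (u + w) * (u + w - 1) +
    (v + w) * (v + w - 1) + (u + v + w) * (u + v + w - 1)

theorem tetraDefect_nonneg (u v w : ℤ) : 0 ≤ tetraDefect u v w := by
  unfold tetraDefect
  have := Int.mul_sub_one_nonneg
  linarith [this u, this v, this w, this (u + w), this (v + w), this (u + v + w)]

theorem tetraDefect_eq_zero_iff (u v w : ℤ) :
    tetraDefect u v w = 0 ↔
      (u, v, w) = (0, 0, 0) ∨ (u, v, w) = (1, 0, 0) ∨ (u, v, w) = (0, 1, 0) ∨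
        (u, v, w) = (0, 0, 1) := by
  simp only [Prod.mk.injEq]
  constructor
  · intro h
    unfold tetraDefect at h
    have := Int.mul_sub_one_nonneg
    have hu := this u; have hv := this v; have hw := this w
    have huw := this (u + w); have hvw := this (v + w); have hs := this (u + v + w)
    have hu0 : u * (u - 1) = 0 := by linarith
    have hv0 : v * (v - 1) = 0 := by linarith
    have hw0 : w * (w - 1) = 0 := by linarith
    have hs0 : (u + v + w) * (u + v + w - 1) = 0 := by linarith
    rw [Int.mul_sub_one_eq_zero_iff] at hu0 hv0 hw0 hs0
    omega
  · rintro (⟨rfl, rfl, rfl⟩ | ⟨rfl, rfl, rfl⟩ | ⟨rfl, rfl, rfl⟩ | ⟨rfl, rfl, rfl⟩) <;> rfl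

theorem liftβ_sub_liftα (p q r x y z : ℤ) :
    liftβ p q r x y z - liftα x y z = (tetraDefect (x - p) (y - q) (z - r) : ℝ) / 2 := by
  simp only [liftβ, liftα, tetraDefect]
  push_cast
  ring

theorem liftβ_ge_liftα (p q r x y z : ℤ) :
    liftα x y z ≤ liftβ p q r x y z ∧
    (liftβ p q r x y z = liftα x y z ↔
      ((x, y, z) = (p, q, r) ∨ (x, y, z) = (p + 1, q, r) ∨
       (x, y, z) = (p, q + 1, r) ∨ (x, y, z) = (p, q, r + 1))) ∧
    (¬ ((x, y, z) = (p, q, r) ∨ (x, y, z) = (p + 1, q, r) ∨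
        (x, y, z) = (p, q + 1, r) ∨ (x, y, z) = (p, q, r + 1)) →
      liftα x y z < liftβ p q r x y z) := by
  have hgap := liftβ_sub_liftα p q r x y z
  have hnonneg : (0 : ℝ) ≤ tetraDefect (x - p) (y - q) (z - r) := by
    exact_mod_cast tetraDefect_nonneg _ _ _
  have hvertex : ((x, y, z) = (p, q, r) ∨ (x, y, z) = (p + 1, q, r) ∨
      (x, y, z) = (p, q + 1, r) ∨ (x, y, z) = (p, q, r + 1)) ↔
      tetraDefect (x - p) (y - q) (z - r) = 0 := by
    rw [tetraDefect_eq_zero_iff]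
    simp only [Prod.mk.injEq]
    omega
  have heq : liftβ p q r x y z = liftα x y z ↔
      ((x, y, z) = (p, q, r) ∨ (x, y, z) = (p + 1, q, r) ∨
       (x, y, z) = (p, q + 1, r) ∨ (x, y, z) = (p, q, r + 1)) := by
    rw [hvertex, ← sub_eq_zero, hgap, div_eq_zero_iff]
    norm_num
  refine ⟨by linarith, heq, fun hnot => lt_of_le_of_ne (by linarith) ?_⟩
  exact fun h => hnot (heq.mp h.symm)
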